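/- arXiv:1408.0482 — 5 statements merged into one kernel-verified Lean document; each statement's English description precedes it below -/
import Mathlib

section
/- Let M be a finite nonempty set of players, N a finite nonempty set of strategies, and v : M × M × N → ℝ a symmetric bipartite utility, i.e. v(x,y,j) = v(y,x,j) for all x,y ∈ M and j ∈ N. Define the utility of player x at profile σ : M → N by u_x(σ) = Σ_{y ∈ M, σ(y) = σ(x)} v(x,y,σ(x)) (the sum includes the term y = x), and define the potential Φ(σ) = Σ_{j ∈ N} ( Σ_{a : σ(a)=j} v(a,a,j) + (1/2) Σ_{a : σ(a)=j} Σ_{b : σ(b)=j, b ≠ a} v(a,b,j) ). Then Φ is an exact potential for the game: for every profile σ, every player x ∈ M and every strategy s ∈ N, Φ(σ[x↦s]) − Φ(σ) = u_x(σ[x↦s]) − u_x(σ), where σ[x↦s] is the profile equal to σ except that player x plays s. -/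
open Finset

/-- Utility of player `x` at profile `σ`: sum of the symmetric bipartite utility
`v x y (σ x)` over all players `y` in the same group as `x` (including `y = x`). -/
noncomputable def groupUtility {M N : Type*} [Fintype M] [DecidableEq N]
    (v : M → M → N → ℝ) (σ : M → N) (x : M) : ℝ :=
  ∑ y ∈ univ.filter (fun y => σ y = σ x), v x y (σ x)

/-- The potential function of the group formation game. -/
noncomputable def groupPotential {M N : Type*} [Fintype M] [DecidableEq M]
    [Fintype N] [DecidableEq N] (v : M → M → N → ℝ) (σ : M → N) : ℝ :=
  ∑ j, ((∑ a ∈ univ.filter (fun a => σ a = j), v a a j)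
    + (1 / 2) * ∑ a ∈ univ.filter (fun a => σ a = j),
        ∑ b ∈ (univ.filter (fun b => σ b = j)).erase a, v a b j)

section Aux

variable {M N : Type*} [Fintype M] [DecidableEq M] [Fintype N] [DecidableEq N]

/-- Sum of cross-utilities of `a` with the other members of its group. -/
noncomputable def rowFull (v : M → M → N → ℝ) (σ : M → N) (a : M) : ℝ :=
  ∑ b ∈ (univ.filter (fun b => σ b = σ a)).erase a, v a b (σ a)

/-- Same, but with player `x` excluded. -/
noncomputable def rowErase (v : M → M → N → ℝ) (x : M) (σ : M → N) (a : M) : ℝ :=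
  ∑ b ∈ ((univ.erase x).filter (fun b => σ b = σ a)).erase a, v a b (σ a)

/-- The part of the potential not involving `x`. -/
noncomputable def psiAux (v : M → M → N → ℝ) (x : M) (σ : M → N) : ℝ :=
  (∑ a ∈ univ.erase x, v a a (σ a))
    + (1 / 2) * ∑ a ∈ univ.erase x, rowErase v x σ a

lemma collapse (σ : M → N) (F : M → N → ℝ) :
    ∑ j, ∑ a ∈ univ.filter (fun a => σ a = j), F a j = ∑ a, F a (σ a) := by
  rw [← Finset.sum_fiberwise univ σ (fun a => F a (σ a))]
  exact Finset.sum_congr rfl fun j _ => Finset.sum_congr rfl fun a ha => by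
    rw [(Finset.mem_filter.mp ha).2]

lemma potential_eq (v : M → M → N → ℝ) (σ : M → N) :
    groupPotential v σ = ∑ a, (v a a (σ a) + (1 / 2) * rowFull v σ a) := by
  unfold groupPotential rowFull
  rw [← collapse σ (fun a j => v a a j
      + (1 / 2) * ∑ b ∈ (univ.filter (fun b => σ b = j)).erase a, v a b j)]
  refine Finset.sum_congr rfl fun j _ => ?_
  rw [Finset.sum_add_distrib, Finset.mul_sum]

lemma key (v : M → M → N → ℝ) (hsym : ∀ x y j, v x y j = v y x j)
    (σ : M → N) (x : M) :
    groupPotential v σ - groupUtility v σ x = psiAux v x σ := by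
  classical
  -- utility
  have hu : groupUtility v σ x = v x x (σ x) + rowFull v σ x := by
    unfold groupUtility rowFull
    have hx : x ∈ univ.filter (fun y => σ y = σ x) := by simp
    rw [← Finset.add_sum_erase _ _ hx]
  -- potential
  have hΦ : groupPotential v σ
      = (v x x (σ x) + (1 / 2) * rowFull v σ x)
        + (∑ a ∈ univ.erase x, v a a (σ a)
            + (1 / 2) * ∑ a ∈ univ.erase x, rowFull v σ a) := by
    rw [potential_eq v σ,
      ← Finset.add_sum_erase univ (fun a => v a a (σ a) + (1 / 2) * rowFull v σ a)
        (mem_univ x)]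
    congr 1
    rw [Finset.sum_add_distrib, ← Finset.mul_sum]
  -- row splitting for a ≠ x
  have hrow : ∀ a ∈ univ.erase x,
      rowFull v σ a = (if σ x = σ a then v a x (σ a) else 0) + rowErase v x σ a := by
    intro a ha
    have hax : a ≠ x := (Finset.mem_erase.mp ha).1
    unfold rowFull rowErase
    by_cases h : σ x = σ a
    · have hx' : x ∈ (univ.filter (fun b => σ b = σ a)).erase a := by
        simp [Finset.mem_erase, h.symm, Ne.symm hax]
      rw [← Finset.add_sum_erase _ _ hx', if_pos h]
      congr 1
      congr 1
      ext b
      simp only [Finset.mem_erase, Finset.mem_filter, Finset.mem_univ, and_true, true_and]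
      tauto
    · rw [if_neg h, zero_add]
      congr 1
      ext b
      simp only [Finset.mem_erase, Finset.mem_filter, Finset.mem_univ, and_true, true_and]
      constructor
      · rintro ⟨hba, hb⟩
        refine ⟨hba, fun hbx => h ?_, hb⟩
        rw [← hbx]; exact hb
      · rintro ⟨hba, _, hb⟩
        exact ⟨hba, hb⟩
  -- the if-sum equals rowFull at x
  have hsumif : ∑ a ∈ univ.erase x, (if σ x = σ a then v a x (σ a) else 0)
      = rowFull v σ x := by
    rw [← Finset.sum_filter]
    unfold rowFull
    have hset : (univ.erase x).filter (fun a => σ x = σ a)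
        = (univ.filter (fun b => σ b = σ x)).erase x := by
      ext b
      simp only [Finset.mem_erase, Finset.mem_filter, Finset.mem_univ, and_true, true_and]
      constructor
      · rintro ⟨hbx, hb⟩; exact ⟨hbx, hb.symm⟩
      · rintro ⟨hbx, hb⟩; exact ⟨hbx, hb.symm⟩
    rw [hset]
    refine Finset.sum_congr rfl fun b hb => ?_
    have hbσ : σ b = σ x := (Finset.mem_filter.mp (Finset.mem_of_mem_erase hb)).2
    rw [hbσ, hsym]
  have hsplit : ∑ a ∈ univ.erase x, rowFull v σ a
      = rowFull v σ x + ∑ a ∈ univ.erase x, rowErase v x σ a := by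
    rw [Finset.sum_congr rfl hrow, Finset.sum_add_distrib, hsumif]
  rw [hΦ, hu, hsplit, psiAux]
  ring

lemma psiAux_update (v : M → M → N → ℝ) (σ : M → N) (x : M) (s : N) :
    psiAux v x (Function.update σ x s) = psiAux v x σ := by
  have h1 : ∀ y : M, y ≠ x → Function.update σ x s y = σ y :=
    fun y hy => Function.update_of_ne hy _ _
  unfold psiAux
  congr 1
  · exact Finset.sum_congr rfl fun a ha => by rw [h1 a (Finset.mem_erase.mp ha).1]
  · congr 1
    refine Finset.sum_congr rfl fun a ha => ?_
    have hax : a ≠ x := (Finset.mem_erase.mp ha).1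
    unfold rowErase
    rw [h1 a hax]
    have hset : (univ.erase x).filter (fun b => Function.update σ x s b = σ a)
        = (univ.erase x).filter (fun b => σ b = σ a) := by
      refine Finset.filter_congr fun b hb => ?_
      rw [h1 b (Finset.mem_erase.mp hb).1]
    rw [hset]

end Aux

/-- `Φ` is an exact potential for the group formation game with separable and
symmetric utilities. -/
theorem groupPotential_is_exact_potential {M N : Type*}
    [Fintype M] [DecidableEq M] [Nonempty M]
    [Fintype N] [DecidableEq N] [Nonempty N]
    (v : M → M → N → ℝ) (hsym : ∀ x y j, v x y j = v y x j)
    (σ : M → N) (x : M) (s : N) :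
    groupPotential v (Function.update σ x s) - groupPotential v σ
      = groupUtility v (Function.update σ x s) x - groupUtility v σ x := by
  have k1 := key v hsym σ x
  have k2 := key v hsym (Function.update σ x s) x
  have hΨ := psiAux_update v σ x s
  linarith
end

section
/- Let M be a finite nonempty set of players, N a finite nonempty set of strategies, v : M × M × N → ℝ symmetric (v(x,y,j) = v(y,x,j)), u_x(σ) = Σ_{y : σ(y)=σ(x)} v(x,y,σ(x)), and Φ(σ) = Σ_{j ∈ N} ( Σ_{a : σ(a)=j} v(a,a,j) + (1/2) Σ_{a : σ(a)=j} Σ_{b : σ(b)=j, b ≠ a} v(a,b,j) ). If σ* maximizes Φ over all strategy profiles (i.e. Φ(σ*) ≥ Φ(σ) for every σ : M → N), then σ* is a pure Nash equilibrium: for every player x ∈ M and every strategy s ∈ N, u_x(σ*) ≥ u_x(σ*[x↦s]). -/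
open Finset

/-- The potential equals half the sum of all utilities plus half the diagonal sum. -/
lemma groupPotential_eq {M N : Type*} [Fintype M] [DecidableEq M]
    [Fintype N] [DecidableEq N] (v : M → M → N → ℝ) (σ : M → N) :
    groupPotential v σ =
      (1 / 2) * ((∑ x, groupUtility v σ x) + ∑ x, v x x (σ x)) := by
  unfold groupPotential
  have key : ∀ j : N,
      ((∑ a ∈ univ.filter (fun a => σ a = j), v a a j)
        + (1 / 2) * ∑ a ∈ univ.filter (fun a => σ a = j),
            ∑ b ∈ (univ.filter (fun b => σ b = j)).erase a, v a b j)
      = (1 / 2) * ((∑ a ∈ univ.filter (fun a => σ a = j),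
            ∑ b ∈ univ.filter (fun b => σ b = j), v a b j)
          + ∑ a ∈ univ.filter (fun a => σ a = j), v a a j) := by
    intro j
    have h1 : ∀ a ∈ univ.filter (fun a => σ a = j),
        ∑ b ∈ (univ.filter (fun b => σ b = j)).erase a, v a b j
        = (∑ b ∈ univ.filter (fun b => σ b = j), v a b j) - v a a j := by
      intro a ha
      have := Finset.add_sum_erase (univ.filter (fun b => σ b = j)) (fun b => v a b j) ha
      linarith
    rw [Finset.sum_congr rfl h1, Finset.sum_sub_distrib]
    ring
  rw [Finset.sum_congr rfl (fun j _ => key j), ← Finset.mul_sum, Finset.sum_add_distrib]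
  congr 1
  congr 1
  · have h2 : ∀ j : N, ∀ a ∈ univ.filter (fun a => σ a = j),
        (∑ b ∈ univ.filter (fun b => σ b = j), v a b j) = groupUtility v σ a := by
      intro j a ha
      rw [Finset.mem_filter] at ha
      rw [← ha.2]
      rfl
    calc ∑ j, ∑ a ∈ univ.filter (fun a => σ a = j),
            ∑ b ∈ univ.filter (fun b => σ b = j), v a b j
        = ∑ j, ∑ a ∈ univ.filter (fun a => σ a = j), groupUtility v σ a := by
          exact Finset.sum_congr rfl fun j _ => Finset.sum_congr rfl (h2 j)
      _ = ∑ a, groupUtility v σ a := Finset.sum_fiberwise _ _ _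
  · calc ∑ j, ∑ a ∈ univ.filter (fun a => σ a = j), v a a j
        = ∑ j, ∑ a ∈ univ.filter (fun a => σ a = j), v a a (σ a) := by
          refine Finset.sum_congr rfl fun j _ => Finset.sum_congr rfl fun a ha => ?_
          rw [Finset.mem_filter] at ha
          rw [ha.2]
      _ = ∑ a, v a a (σ a) := Finset.sum_fiberwise _ _ _

/-- Utility as a sum over all players with an indicator. -/
lemma groupUtility_eq_sum_ite {M N : Type*} [Fintype M] [DecidableEq N]
    (v : M → M → N → ℝ) (σ : M → N) (x : M) :
    groupUtility v σ x = ∑ y, if σ y = σ x then v x y (σ x) else 0 := by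
  rw [groupUtility, Finset.sum_filter]

lemma util_diff {M N : Type*} [Fintype M] [DecidableEq M] [DecidableEq N]
    (v : M → M → N → ℝ) (σ : M → N) (x : M) (s : N) (y : M) (hy : y ≠ x) :
    groupUtility v (Function.update σ x s) y - groupUtility v σ y =
      (if s = σ y then v y x (σ y) else 0) -
        (if σ x = σ y then v y x (σ y) else 0) := by
  have hyy : Function.update σ x s y = σ y := Function.update_of_ne hy s σ
  rw [groupUtility_eq_sum_ite, groupUtility_eq_sum_ite, hyy, ← Finset.sum_sub_distrib]
  rw [Fintype.sum_eq_single x (fun z hz => by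
    rw [Function.update_of_ne hz s σ]; ring)]
  rw [Function.update_self]

/-- Key: the game is an exact potential game. -/
lemma potential_diff {M N : Type*} [Fintype M] [DecidableEq M]
    [Fintype N] [DecidableEq N]
    (v : M → M → N → ℝ) (hsym : ∀ x y j, v x y j = v y x j)
    (σ : M → N) (x : M) (s : N) :
    groupPotential v (Function.update σ x s) - groupPotential v σ =
      groupUtility v (Function.update σ x s) x - groupUtility v σ x := by
  set σ' := Function.update σ x s with hσ'
  have hx' : σ' x = s := Function.update_self x s σ
  -- sum of all utility differences
  have hdiag : ∑ y, v y y (σ' y) - ∑ y, v y y (σ y)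
      = v x x s - v x x (σ x) := by
    rw [← Finset.sum_sub_distrib]
    rw [Fintype.sum_eq_single x (fun z hz => by
      rw [hσ', Function.update_of_ne hz s σ]; ring)]
    rw [hx']
  have hA : ∑ y ∈ univ.erase x, (if s = σ y then v y x (σ y) else 0)
      = groupUtility v σ' x - v x x s := by
    have h0 : groupUtility v σ' x = ∑ y, if σ' y = s then v x y s else 0 := by
      rw [groupUtility_eq_sum_ite, hx']
    rw [h0, ← Finset.sum_erase_add _ _ (Finset.mem_univ x), hx', if_pos rfl]
    have hcongr : ∀ y ∈ univ.erase x,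
        (if s = σ y then v y x (σ y) else 0) = if σ' y = s then v x y s else 0 := by
      intro y hy
      have hyy : σ' y = σ y := Function.update_of_ne (Finset.ne_of_mem_erase hy) s σ
      rw [hyy]
      by_cases h : σ y = s
      · rw [if_pos h.symm, if_pos h, h, hsym]
      · rw [if_neg (fun hh => h hh.symm), if_neg h]
    rw [Finset.sum_congr rfl hcongr]
    ring
  have hB : ∑ y ∈ univ.erase x, (if σ x = σ y then v y x (σ y) else 0)
      = groupUtility v σ x - v x x (σ x) := by
    rw [groupUtility_eq_sum_ite, ← Finset.sum_erase_add _ _ (Finset.mem_univ x), if_pos rfl]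
    have hcongr : ∀ y ∈ univ.erase x,
        (if σ x = σ y then v y x (σ y) else 0) = if σ y = σ x then v x y (σ x) else 0 := by
      intro y _
      by_cases h : σ y = σ x
      · rw [if_pos h.symm, if_pos h, h, hsym]
      · rw [if_neg (fun hh => h hh.symm), if_neg h]
    rw [Finset.sum_congr rfl hcongr]
    ring
  have hsum : ∑ y, groupUtility v σ' y - ∑ y, groupUtility v σ y
      = (groupUtility v σ' x - groupUtility v σ x)
        + ((groupUtility v σ' x - v x x s) - (groupUtility v σ x - v x x (σ x))) := by
    rw [← Finset.sum_sub_distrib]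
    rw [← Finset.sum_erase_add _ _ (Finset.mem_univ x)]
    have step : ∀ y ∈ univ.erase x,
        groupUtility v σ' y - groupUtility v σ y =
          (if s = σ y then v y x (σ y) else 0) -
            (if σ x = σ y then v y x (σ y) else 0) := by
      intro y hy
      exact util_diff v σ x s y (Finset.ne_of_mem_erase hy)
    rw [Finset.sum_congr rfl step, Finset.sum_sub_distrib, hA, hB]
    ring
  rw [groupPotential_eq, groupPotential_eq]
  have := hdiag
  have := hsum
  linarith

/-- A strategy profile maximizing the potential function is a pure Nash
equilibrium of the group formation game. -/
theorem maximizer_of_potential_is_nash {M N : Type*}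
    [Fintype M] [DecidableEq M] [Nonempty M]
    [Fintype N] [DecidableEq N] [Nonempty N]
    (v : M → M → N → ℝ) (hsym : ∀ x y j, v x y j = v y x j)
    (σstar : M → N) (hmax : ∀ σ : M → N, groupPotential v σstar ≥ groupPotential v σ) :
    ∀ (x : M) (s : N),
      groupUtility v σstar x ≥ groupUtility v (Function.update σstar x s) x := by
  intro x s
  have h := hmax (Function.update σstar x s)
  have hd := potential_diff v hsym σstar x s
  linarith
end

section
/- Best-reply dynamics in a group formation game with symmetric bipartite utility always converge: with M, N finite and nonempty, v : M × M × N → ℝ symmetric, and u_x(σ) = Σ_{y : σ(y)=σ(x)} v(x,y,σ(x)), there is no infinite sequence of strategy profiles σ⁰, σ¹, σ², … such that for every t there exist a player x_t ∈ M and a strategy s_t ∈ N with σ^{t+1} = σ^t[x_t ↦ s_t] and u_{x_t}(σ^{t+1}) > u_{x_t}(σ^t); consequently every maximal sequence of strictly improving unilateral deviations terminates at a pure Nash equilibrium. -/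
open Finset

noncomputable def grpPotential {M N : Type*} [Fintype M] [DecidableEq N]
    (v : M → M → N → ℝ) (σ : M → N) : ℝ :=
  (∑ a, groupUtility v σ a) + ∑ a, v a a (σ a)

lemma grpPotential_decomp {M N : Type*} [Fintype M] [DecidableEq M] [DecidableEq N]
    (v : M → M → N → ℝ) (hsym : ∀ x y j, v x y j = v y x j) (σ : M → N) (x : M) :
    grpPotential v σ = 2 * groupUtility v σ x
      + (∑ a ∈ univ.erase x, ∑ b ∈ univ.erase x,
          if σ b = σ a then v a b (σ a) else 0)
      + ∑ a ∈ univ.erase x, v a a (σ a) := by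
  have hx : (x : M) ∈ (univ : Finset M) := mem_univ x
  rw [grpPotential]
  rw [← Finset.add_sum_erase _ (fun a => groupUtility v σ a) hx]
  rw [← Finset.add_sum_erase _ (fun a => v a a (σ a)) hx]
  have h1 : ∑ a ∈ univ.erase x, groupUtility v σ a
      = (∑ a ∈ univ.erase x, if σ x = σ a then v a x (σ a) else 0)
        + ∑ a ∈ univ.erase x, ∑ b ∈ univ.erase x,
            if σ b = σ a then v a b (σ a) else 0 := by
    rw [← Finset.sum_add_distrib]
    refine Finset.sum_congr rfl (fun a _ => ?_)
    rw [groupUtility_eq_sum_ite]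
    rw [← Finset.add_sum_erase _ (fun b => if σ b = σ a then v a b (σ a) else 0) hx]
  have h2 : (∑ a ∈ univ.erase x, if σ x = σ a then v a x (σ a) else 0)
      = groupUtility v σ x - v x x (σ x) := by
    rw [groupUtility_eq_sum_ite]
    rw [← Finset.add_sum_erase _ (fun y => if σ y = σ x then v x y (σ x) else 0) hx]
    simp only [if_pos rfl]
    have : ∀ a ∈ univ.erase x, (if σ x = σ a then v a x (σ a) else 0)
        = (if σ a = σ x then v x a (σ x) else 0) := by
      intro a _
      by_cases h : σ a = σ x
      · rw [if_pos h.symm, if_pos h, h, hsym]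
      · rw [if_neg (fun hh => h hh.symm), if_neg h]
    rw [Finset.sum_congr rfl this]
    simp
  rw [h1, h2]
  ring

lemma grpPotential_diff {M N : Type*} [Fintype M] [DecidableEq M] [DecidableEq N]
    (v : M → M → N → ℝ) (hsym : ∀ x y j, v x y j = v y x j) (σ : M → N) (x : M) (s : N) :
    grpPotential v (Function.update σ x s) - grpPotential v σ
      = 2 * (groupUtility v (Function.update σ x s) x - groupUtility v σ x) := by
  rw [grpPotential_decomp v hsym σ x, grpPotential_decomp v hsym (Function.update σ x s) x]
  have h1 : ∀ a ∈ univ.erase x, (∑ b ∈ univ.erase x,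
        if Function.update σ x s b = Function.update σ x s a
        then v a b (Function.update σ x s a) else 0)
      = ∑ b ∈ univ.erase x, if σ b = σ a then v a b (σ a) else 0 := by
    intro a ha
    refine Finset.sum_congr rfl (fun b hb => ?_)
    rw [Function.update_of_ne (Finset.ne_of_mem_erase ha),
        Function.update_of_ne (Finset.ne_of_mem_erase hb)]
  have h2 : ∀ a ∈ univ.erase x, v a a (Function.update σ x s a) = v a a (σ a) := by
    intro a ha
    rw [Function.update_of_ne (Finset.ne_of_mem_erase ha)]
  rw [Finset.sum_congr rfl h1, Finset.sum_congr rfl h2]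
  ring

/-- Best-reply (strict improvement) dynamics in a group formation game with
symmetric bipartite utility always converge: there is no infinite sequence of
strictly improving unilateral deviations, and consequently any profile from
which no strictly improving unilateral deviation exists is a pure Nash
equilibrium. -/
theorem best_reply_dynamics_converge {M N : Type*}
    [Fintype M] [DecidableEq M] [Nonempty M]
    [Fintype N] [DecidableEq N] [Nonempty N]
    (v : M → M → N → ℝ) (hsym : ∀ x y j, v x y j = v y x j) :
    (¬ ∃ σseq : ℕ → M → N, ∀ t : ℕ, ∃ (x : M) (s : N),
        σseq (t + 1) = Function.update (σseq t) x s ∧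
        groupUtility v (σseq (t + 1)) x > groupUtility v (σseq t) x) ∧
    (∀ σ : M → N,
      (∀ (x : M) (s : N),
        ¬ groupUtility v (Function.update σ x s) x > groupUtility v σ x) →
      ∀ (x : M) (s : N),
        groupUtility v σ x ≥ groupUtility v (Function.update σ x s) x) := by
  constructor
  · rintro ⟨σseq, hseq⟩
    have hmono : StrictMono (fun t => grpPotential v (σseq t)) := by
      apply strictMono_nat_of_lt_succ
      intro t
      obtain ⟨x, s, hupd, hgt⟩ := hseq t
      have := grpPotential_diff v hsym (σseq t) x s
      rw [← hupd] at this
      nlinarith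
    have hinj : Function.Injective σseq := fun t1 t2 h =>
      hmono.injective (congrArg (grpPotential v) h)
    exact not_injective_infinite_finite σseq hinj
  · intro σ h x s
    exact le_of_not_gt (h x s)
end

section
/- Elimination of dominated assignments preserves the set-covering optimum: let M, N be finite nonempty sets, p : M × N → ℝ with p(i,j) ≥ 0 for all i,j, and for each assignment pair (S,j) with S ⊆ M nonempty and j ∈ N let q(S,j) = max_{i∈S} p(i,j). Let 𝒮 be a finite family of assignment pairs that admits a cover of M, and suppose (A,j), (B,j) ∈ 𝒮 with B ⊆ A, B ≠ A, and q(A,j) = q(B,j). Then the minimum of Σ_{(S,j)∈𝒞} q(S,j) over covers 𝒞 ⊆ 𝒮 of M equals the minimum of the same quantity over covers 𝒞 ⊆ 𝒮 \ {(B,j)} of M. -/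
open Finset

/-- Cost of an assignment pair `(S, j)`: the maximal power cost `p i j` over
mobiles `i ∈ S` (and `0` if `S` is empty). -/
noncomputable def pairCost {M N : Type*} (p : M → N → ℝ)
    (c : Finset M × N) : ℝ :=
  if h : c.1.Nonempty then c.1.sup' h (fun i => p i c.2) else 0

/-- A family of assignment pairs covers the set of mobiles `M` if every mobile
belongs to the mobile set of some pair of the family. -/
def CoversAll {M N : Type*} (𝒞 : Finset (Finset M × N)) : Prop :=
  ∀ i : M, ∃ c ∈ 𝒞, i ∈ c.1

lemma pairCost_nonneg {M N : Type*} (p : M → N → ℝ) (hp : ∀ i j, 0 ≤ p i j)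
    (c : Finset M × N) : 0 ≤ pairCost p c := by
  unfold pairCost
  split
  · next h =>
      obtain ⟨i, hi⟩ := h
      exact le_trans (hp i c.2) (Finset.le_sup' (fun i => p i c.2) hi)
  · exact le_refl 0

/-- Removing from the collection a dominated assignment `(B, j)` — i.e. one
with `B ⊂ A` and `q(A,j) = q(B,j)` for some `(A, j)` in the collection — does
not change the minimal cover cost. -/
theorem elimination_preserves_optimum {M N : Type*}
    [Fintype M] [DecidableEq M] [Nonempty M]
    [Fintype N] [DecidableEq N] [Nonempty N]
    (p : M → N → ℝ) (hp : ∀ i j, 0 ≤ p i j)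
    (𝒮 : Finset (Finset M × N)) (h𝒮 : ∀ c ∈ 𝒮, c.1.Nonempty)
    (hcov : ∃ 𝒞 ⊆ 𝒮, CoversAll 𝒞)
    (A B : Finset M) (j : N)
    (hA : (A, j) ∈ 𝒮) (hB : (B, j) ∈ 𝒮) (hBA : B ⊆ A) (hne : B ≠ A)
    (hq : pairCost p (A, j) = pairCost p (B, j)) :
    sInf {r : ℝ | ∃ 𝒞 ⊆ 𝒮, CoversAll 𝒞 ∧ r = ∑ c ∈ 𝒞, pairCost p c}
      = sInf {r : ℝ | ∃ 𝒞 ⊆ 𝒮.erase (B, j),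
          CoversAll 𝒞 ∧ r = ∑ c ∈ 𝒞, pairCost p c} := by
  set S1 := {r : ℝ | ∃ 𝒞 ⊆ 𝒮, CoversAll 𝒞 ∧ r = ∑ c ∈ 𝒞, pairCost p c} with hS1def
  set S2 := {r : ℝ | ∃ 𝒞 ⊆ 𝒮.erase (B, j), CoversAll 𝒞 ∧ r = ∑ c ∈ 𝒞, pairCost p c}
    with hS2def
  have hmem2 : ∀ (𝒞 : Finset (Finset M × N)), 𝒞 ⊆ 𝒮.erase (B, j) → CoversAll 𝒞 →
      (∑ c ∈ 𝒞, pairCost p c) ∈ S2 := by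
    intro 𝒞 h1 h2
    rw [hS2def]
    exact ⟨𝒞, h1, h2, rfl⟩
  have hABne : (A, j) ≠ (B, j) := by
    intro h; exact hne (congrArg Prod.fst h).symm
  -- key: every cover in 𝒮 can be improved to one avoiding (B,j)
  have key : ∀ r ∈ S1, ∃ r' ∈ S2, r' ≤ r := by
    rintro r ⟨𝒞, h𝒞S, h𝒞cov, rfl⟩
    by_cases hBmem : (B, j) ∈ 𝒞
    · set 𝒞' := (insert (A, j) 𝒞).erase (B, j) with h𝒞'def
      have hsub : 𝒞' ⊆ 𝒮.erase (B, j) := by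
        intro c hc
        rw [h𝒞'def, Finset.mem_erase] at hc
        rw [Finset.mem_erase]
        refine ⟨hc.1, ?_⟩
        rcases Finset.mem_insert.mp hc.2 with h | h
        · exact h ▸ hA
        · exact h𝒞S h
      have hcov' : CoversAll 𝒞' := by
        intro i
        obtain ⟨c, hc, hic⟩ := h𝒞cov i
        by_cases hcB : c = (B, j)
        · exact ⟨(A, j), Finset.mem_erase.mpr ⟨hABne, Finset.mem_insert_self _ _⟩,
            hBA (by rw [hcB] at hic; exact hic)⟩
        · exact ⟨c, Finset.mem_erase.mpr ⟨hcB, Finset.mem_insert_of_mem hc⟩, hic⟩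
      refine ⟨∑ c ∈ 𝒞', pairCost p c, hmem2 𝒞' hsub hcov', ?_⟩
      by_cases hAmem : (A, j) ∈ 𝒞
      · rw [h𝒞'def, Finset.insert_eq_self.mpr hAmem]
        calc ∑ c ∈ 𝒞.erase (B, j), pairCost p c
            ≤ pairCost p (B, j) + ∑ c ∈ 𝒞.erase (B, j), pairCost p c := by
              have := pairCost_nonneg p hp (B, j); linarith
          _ = ∑ c ∈ 𝒞, pairCost p c := Finset.add_sum_erase _ _ hBmem
      · have hAnot : (A, j) ∉ 𝒞.erase (B, j) := fun h => hAmem (Finset.mem_of_mem_erase h)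
        rw [h𝒞'def, Finset.erase_insert_of_ne hABne, Finset.sum_insert hAnot, hq,
          Finset.add_sum_erase _ _ hBmem]
    · have hsub : 𝒞 ⊆ 𝒮.erase (B, j) := fun c hc =>
        Finset.mem_erase.mpr ⟨fun h => hBmem (h ▸ hc), h𝒞S hc⟩
      exact ⟨_, hmem2 𝒞 hsub h𝒞cov, le_refl _⟩
  have hS2sub : S2 ⊆ S1 := by
    rintro r ⟨𝒞, h𝒞S, h𝒞cov, rfl⟩
    exact ⟨𝒞, fun c hc => Finset.mem_of_mem_erase (h𝒞S hc), h𝒞cov, rfl⟩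
  have hbdd1 : BddBelow S1 := by
    refine ⟨0, ?_⟩
    rintro r ⟨𝒞, -, -, rfl⟩
    exact Finset.sum_nonneg fun c _ => pairCost_nonneg p hp c
  have hbdd2 : BddBelow S2 := hbdd1.mono hS2sub
  obtain ⟨𝒞₀, h𝒞₀S, h𝒞₀cov⟩ := hcov
  have hS1ne : S1.Nonempty := ⟨_, 𝒞₀, h𝒞₀S, h𝒞₀cov, rfl⟩
  obtain ⟨r₀, hr₀, -⟩ := key _ hS1ne.choose_spec
  have hS2ne : S2.Nonempty := ⟨r₀, hr₀⟩
  apply le_antisymm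
  · exact csInf_le_csInf hbdd1 hS2ne hS2sub
  · apply le_csInf hS1ne
    intro r hr
    obtain ⟨r', hr', hle⟩ := key r hr
    exact le_trans (csInf_le hbdd2 hr') hle
end

section
/- The set-covering relaxation of the mobile assignment problem has the same optimal value as the partition (single-assignment) formulation: let M, N be finite nonempty sets and p : M × N → ℝ with p(i,j) ≥ 0 for all i,j, and q(S,j) = max_{i∈S} p(i,j) for nonempty S ⊆ M. Then the minimum of Σ_{(S,j)∈𝒞} q(S,j) over all families 𝒞 of assignment pairs (S,j) (each with distinct j) covering M equals the minimum over all assignment functions a : M → N of Σ_{j ∈ N, a⁻¹(j) ≠ ∅} max_{i : a(i)=j} p(i,j). -/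
open Finset

lemma pairCost_mono {M N : Type*} (p : M → N → ℝ) {S T : Finset M} (j : N)
    (hS : S.Nonempty) (hST : S ⊆ T) :
    pairCost p (S, j) ≤ pairCost p (T, j) := by
  have hT : T.Nonempty := hS.mono hST
  simp only [pairCost, dif_pos hS, dif_pos hT]
  exact Finset.sup'_le _ _ fun i hi => Finset.le_sup' (fun i => p i j) (hST hi)

/-- The set-covering relaxation of the mobile assignment problem has the same
optimal value as the partition (single-assignment) formulation: the minimal
cost of a cover of the mobiles by assignment pairs with pairwise distinct base
stations equals the minimal total cost over assignment functions `a : M → N`. -/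
theorem set_cover_optimum_eq_partition_optimum {M N : Type*}
    [Fintype M] [DecidableEq M] [Nonempty M]
    [Fintype N] [DecidableEq N] [Nonempty N]
    (p : M → N → ℝ) (hp : ∀ i j, 0 ≤ p i j) :
    sInf {r : ℝ | ∃ 𝒞 : Finset (Finset M × N),
        (∀ c ∈ 𝒞, c.1.Nonempty) ∧
        (∀ c ∈ 𝒞, ∀ c' ∈ 𝒞, c.2 = c'.2 → c = c') ∧
        CoversAll 𝒞 ∧ r = ∑ c ∈ 𝒞, pairCost p c}
      = sInf {r : ℝ | ∃ a : M → N,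
          r = ∑ j ∈ univ.filter (fun j => ∃ i, a i = j),
                pairCost p (univ.filter (fun i => a i = j), j)} := by
  classical
  set A := {r : ℝ | ∃ 𝒞 : Finset (Finset M × N),
        (∀ c ∈ 𝒞, c.1.Nonempty) ∧
        (∀ c ∈ 𝒞, ∀ c' ∈ 𝒞, c.2 = c'.2 → c = c') ∧
        CoversAll 𝒞 ∧ r = ∑ c ∈ 𝒞, pairCost p c} with hA
  set B := {r : ℝ | ∃ a : M → N,
          r = ∑ j ∈ univ.filter (fun j => ∃ i, a i = j),
                pairCost p (univ.filter (fun i => a i = j), j)} with hB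
  -- B ⊆ A
  have hBA : B ⊆ A := by
    rintro r ⟨a, rfl⟩
    refine ⟨(univ.filter (fun j => ∃ i, a i = j)).image
      (fun j => (univ.filter (fun i => a i = j), j)), ?_, ?_, ?_, ?_⟩
    · intro c hc
      simp only [mem_image, mem_filter, mem_univ, true_and] at hc
      obtain ⟨j, ⟨i, hij⟩, rfl⟩ := hc
      exact ⟨i, by simp [hij]⟩
    · intro c hc c' hc' hcc'
      simp only [mem_image, mem_filter, mem_univ, true_and] at hc hc'
      obtain ⟨j, _, rfl⟩ := hc
      obtain ⟨j', _, rfl⟩ := hc'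
      simp only at hcc'
      subst hcc'
      rfl
    · intro i
      refine ⟨(univ.filter (fun i' => a i' = a i), a i), ?_, ?_⟩
      · simp only [mem_image, mem_filter, mem_univ, true_and]
        exact ⟨a i, ⟨i, rfl⟩, rfl⟩
      · simp
    · rw [Finset.sum_image]
      intro x _ y _ hxy
      exact (Prod.mk.injEq _ _ _ _).mp hxy |>.2
  -- nonemptiness and lower bounds
  have hBne : B.Nonempty := ⟨_, ⟨fun _ => Classical.arbitrary N, rfl⟩⟩
  have hAne : A.Nonempty := ⟨_, hBA hBne.choose_spec⟩
  have hAbdd : BddBelow A := by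
    refine ⟨0, ?_⟩
    rintro r ⟨𝒞, _, _, _, rfl⟩
    exact Finset.sum_nonneg fun c _ => pairCost_nonneg p hp c
  have hBbdd : BddBelow B := by
    refine ⟨0, ?_⟩
    rintro r ⟨a, rfl⟩
    exact Finset.sum_nonneg fun c _ => pairCost_nonneg p hp _
  refine le_antisymm (csInf_le_csInf hAbdd hBne hBA) (le_csInf hAne ?_)
  rintro r ⟨𝒞, hNe, hDist, hCov, rfl⟩
  choose f hf1 hf2 using hCov
  set a : M → N := fun i => (f i).2 with ha
  have key : ∀ j, (∃ i, a i = j) → ∀ i', a i' = j → f i' ∈ 𝒞 ∧ (f i').2 = j := by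
    intro j _ i' hi'
    exact ⟨hf1 i', hi'⟩
  -- the canonical pair for each used station
  have hsum : (∑ j ∈ univ.filter (fun j => ∃ i, a i = j),
      pairCost p (univ.filter (fun i => a i = j), j)) ≤ ∑ c ∈ 𝒞, pairCost p c := by
    set F := univ.filter (fun j : N => ∃ i, a i = j) with hF
    have hmemF : ∀ j ∈ F, ∃ i, a i = j := by
      intro j hj; simpa [hF] using hj
    set cfun : N → Finset M × N := fun j =>
      if h : ∃ i, a i = j then f h.choose else f (Classical.arbitrary M) with hcfun
    have hc1 : ∀ j ∈ F, cfun j ∈ 𝒞 := by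
      intro j hj
      obtain h := hmemF j hj
      simp only [hcfun, dif_pos h]
      exact hf1 _
    have hc2 : ∀ j ∈ F, (cfun j).2 = j := by
      intro j hj
      obtain h := hmemF j hj
      simp only [hcfun, dif_pos h]
      exact h.choose_spec
    have step1 : ∀ j ∈ F,
        pairCost p (univ.filter (fun i => a i = j), j) ≤ pairCost p (cfun j) := by
      intro j hj
      obtain ⟨i0, hi0⟩ := hmemF j hj
      have hne : (univ.filter (fun i => a i = j)).Nonempty := ⟨i0, by simp [hi0]⟩
      have hsub : univ.filter (fun i => a i = j) ⊆ (cfun j).1 := by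
        intro i hi
        simp only [mem_filter, mem_univ, true_and] at hi
        have : f i = cfun j := by
          apply hDist _ (hf1 i) _ (hc1 j hj)
          rw [hc2 j hj]; exact hi
        rw [← this]; exact hf2 i
      have heq : ((cfun j).1, j) = cfun j := Prod.ext rfl (hc2 j hj).symm
      rw [← heq]
      exact pairCost_mono p j hne hsub
    calc (∑ j ∈ F, pairCost p (univ.filter (fun i => a i = j), j))
        ≤ ∑ j ∈ F, pairCost p (cfun j) := Finset.sum_le_sum step1
      _ = ∑ c ∈ F.image cfun, pairCost p c := by
          rw [Finset.sum_image]
          intro x hx y hy hxy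
          rw [← hc2 x hx, ← hc2 y hy, hxy]
      _ ≤ ∑ c ∈ 𝒞, pairCost p c := by
          apply Finset.sum_le_sum_of_subset_of_nonneg
          · intro c hc
            simp only [mem_image] at hc
            obtain ⟨j, hj, rfl⟩ := hc
            exact hc1 j hj
          · intro c _ _
            exact pairCost_nonneg p hp c
  exact le_trans (csInf_le hBbdd ⟨a, rfl⟩) hsum
end
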